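/- Let a > 0, c, and t be real numbers, and define Ψ : ℝ × ℝ → ℂ by Ψ(x,t) = √(2a)·exp(i(c x/2 − (c²/4 − a)t)) / cosh(√a·(x − c t)). Then the energy E(t) = ∫_ℝ ( |∂Ψ/∂x (x,t)|² − (1/2)|Ψ(x,t)|⁴ ) dx equals √a·(c² − (4/3)a) for every t; in particular, for a = 1/100 and c = 1/10 the energy equals −1/3000 for all t. -/

import Mathlib

open Real MeasureTheory Filter Set Topology

noncomputable def stmt18T (x : ℝ) : ℝ := Real.sinh x / Real.cosh x

lemma stmt18_hasDerivAt_T (x : ℝ) :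
    HasDerivAt stmt18T (1 / Real.cosh x ^ 2) x := by
  have h := (Real.hasDerivAt_sinh x).div (Real.hasDerivAt_cosh x) (Real.cosh_pos x).ne'
  refine h.congr_deriv (Eq.symm ?_)
  have := Real.cosh_sq_sub_sinh_sq x
  rw [← this]; ring

lemma stmt18_T_eq (x : ℝ) : stmt18T x = 1 - 2 / (Real.exp (2 * x) + 1) := by
  have h1 : Real.exp (2 * x) = Real.exp x * Real.exp x := by
    rw [show (2:ℝ) * x = x + x by ring, Real.exp_add]
  have h2 : (0:ℝ) < Real.exp x := Real.exp_pos x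
  have h3 : Real.exp (-x) = (Real.exp x)⁻¹ := Real.exp_neg x
  unfold stmt18T
  rw [Real.sinh_eq, Real.cosh_eq, h3, h1]
  have h4 : Real.exp x + (Real.exp x)⁻¹ ≠ 0 := by positivity
  field_simp
  ring

lemma stmt18_tendsto_T_atTop : Tendsto stmt18T atTop (𝓝 1) := by
  have h : Tendsto (fun x : ℝ => 1 - 2 / (Real.exp (2 * x) + 1)) atTop (𝓝 1) := by
    have h1 : Tendsto (fun x : ℝ => Real.exp (2 * x) + 1) atTop atTop :=
      (Real.tendsto_exp_atTop.comp (tendsto_id.const_mul_atTop two_pos)).atTop_add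
        tendsto_const_nhds
    have h2 : Tendsto (fun x : ℝ => 2 / (Real.exp (2 * x) + 1)) atTop (𝓝 0) :=
      Tendsto.div_atTop tendsto_const_nhds h1
    simpa using tendsto_const_nhds.sub h2
  simpa [funext stmt18_T_eq] using h

lemma stmt18_tendsto_T_atBot : Tendsto stmt18T atBot (𝓝 (-1)) := by
  have h : Tendsto (fun x : ℝ => stmt18T (-x)) atTop (𝓝 (-1)) := by
    have := stmt18_tendsto_T_atTop.neg
    simpa [stmt18T, Real.sinh_neg, Real.cosh_neg, neg_div] using this
  have := h.comp tendsto_neg_atBot_atTop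
  have e : ((fun x : ℝ => stmt18T (-x)) ∘ Neg.neg) = stmt18T := by
    funext x; simp [Function.comp]
  rwa [e] at this

noncomputable def stmt18T2 (x : ℝ) : ℝ := stmt18T x - stmt18T x ^ 3 / 3

lemma stmt18_hasDerivAt_T2 (x : ℝ) :
    HasDerivAt stmt18T2 (1 / Real.cosh x ^ 4) x := by
  have h := (stmt18_hasDerivAt_T x).sub (((stmt18_hasDerivAt_T x).pow 3).div_const 3)
  refine h.congr_deriv (Eq.symm ?_)
  have hc := (Real.cosh_pos x).ne'
  have hs : Real.sinh x ^ 2 = Real.cosh x ^ 2 - 1 := Real.sinh_sq x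
  unfold stmt18T
  field_simp
  rw [show (3:ℕ) - 1 = 2 from rfl, div_pow, hs]; push_cast; field_simp; ring

lemma stmt18_tendsto_T2_atTop : Tendsto stmt18T2 atTop (𝓝 (2/3)) := by
  have := stmt18_tendsto_T_atTop.sub ((stmt18_tendsto_T_atTop.pow 3).div_const 3)
  norm_num at this
  exact this

lemma stmt18_tendsto_T2_atBot : Tendsto stmt18T2 atBot (𝓝 (-(2/3))) := by
  have := stmt18_tendsto_T_atBot.sub ((stmt18_tendsto_T_atBot.pow 3).div_const 3)
  have e : (-1 : ℝ) - (-1)^3/3 = -(2/3) := by norm_num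
  rwa [e] at this

lemma stmt18_even_integrable {f : ℝ → ℝ} (heven : ∀ x, f (-x) = f x)
    (hIoi : IntegrableOn f (Ioi 0)) (hIci : IntegrableOn f (Ici 0)) : Integrable f := by
  rw [← integrableOn_univ, ← Set.Iio_union_Ici (a := (0:ℝ)), integrableOn_union]
  refine ⟨?_, hIci⟩
  rw [← (Measure.measurePreserving_neg (volume : Measure ℝ)).integrableOn_comp_preimage
      (Homeomorph.neg ℝ).measurableEmbedding]
  simpa [Function.comp_def, heven, neg_preimage, neg_Iio, neg_zero] using hIoi

lemma stmt18_integrable_sech2 : Integrable (fun x : ℝ => 1 / Real.cosh x ^ 2) := by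
  have hIoi : IntegrableOn (fun x : ℝ => 1 / Real.cosh x ^ 2) (Ioi 0) :=
    integrableOn_Ioi_deriv_of_nonneg ((stmt18_hasDerivAt_T 0).continuousAt.continuousWithinAt)
      (fun x _ => stmt18_hasDerivAt_T x) (fun x _ => by positivity) stmt18_tendsto_T_atTop
  refine stmt18_even_integrable (fun x => by simp [Real.cosh_neg]) hIoi ?_
  rwa [integrableOn_Ici_iff_integrableOn_Ioi]

lemma stmt18_integrable_sech4 : Integrable (fun x : ℝ => 1 / Real.cosh x ^ 4) := by
  have hIoi : IntegrableOn (fun x : ℝ => 1 / Real.cosh x ^ 4) (Ioi 0) :=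
    integrableOn_Ioi_deriv_of_nonneg ((stmt18_hasDerivAt_T2 0).continuousAt.continuousWithinAt)
      (fun x _ => stmt18_hasDerivAt_T2 x) (fun x _ => by positivity) stmt18_tendsto_T2_atTop
  refine stmt18_even_integrable (fun x => by simp [Real.cosh_neg]) hIoi ?_
  rwa [integrableOn_Ici_iff_integrableOn_Ioi]

lemma stmt18_integral_sech2 : ∫ x : ℝ, 1 / Real.cosh x ^ 2 = 2 := by
  have := integral_of_hasDerivAt_of_tendsto (f := stmt18T) (fun x => stmt18_hasDerivAt_T x)
    stmt18_integrable_sech2 stmt18_tendsto_T_atBot stmt18_tendsto_T_atTop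
  rw [this]; norm_num

lemma stmt18_integral_sech4 : ∫ x : ℝ, 1 / Real.cosh x ^ 4 = 4/3 := by
  have := integral_of_hasDerivAt_of_tendsto (f := stmt18T2) (fun x => stmt18_hasDerivAt_T2 x)
    stmt18_integrable_sech4 stmt18_tendsto_T2_atBot stmt18_tendsto_T2_atTop
  rw [this]; norm_num

lemma stmt18_hasDerivAt_psi (a c t k : ℝ) (x : ℝ) :
    HasDerivAt (fun y : ℝ => (↑(Real.sqrt (2*a)) : ℂ) *
        Complex.exp (Complex.I * ((c * y / 2 - k : ℝ) : ℂ)) /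
        ((Real.cosh (Real.sqrt a * (y - c * t)) : ℝ) : ℂ))
      ((↑(Real.sqrt (2*a)) * Complex.exp (Complex.I * ((c * x / 2 - k : ℝ) : ℂ)) *
          (Complex.I * ((c/2 : ℝ) : ℂ)) * ↑(Real.cosh (Real.sqrt a * (x - c * t)))
        - ↑(Real.sqrt (2*a)) * Complex.exp (Complex.I * ((c * x / 2 - k : ℝ) : ℂ)) *
          ↑(Real.sinh (Real.sqrt a * (x - c * t)) * Real.sqrt a))
        / (↑(Real.cosh (Real.sqrt a * (x - c * t))) : ℂ) ^ 2) x := by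
  have hφ : HasDerivAt (fun y : ℝ => c * y / 2 - k) (c / 2) x := by
    simpa using (((hasDerivAt_id x).const_mul c).div_const 2).sub_const k
  have hN : HasDerivAt (fun y : ℝ => (↑(Real.sqrt (2*a)) : ℂ) *
      Complex.exp (Complex.I * ((c * y / 2 - k : ℝ) : ℂ)))
      (↑(Real.sqrt (2*a)) * (Complex.exp (Complex.I * ((c * x / 2 - k : ℝ) : ℂ)) *
        (Complex.I * ((c/2 : ℝ) : ℂ)))) x :=
    ((hφ.ofReal_comp.const_mul Complex.I).cexp).const_mul _
  have hDr : HasDerivAt (fun y : ℝ => Real.cosh (Real.sqrt a * (y - c * t)))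
      (Real.sinh (Real.sqrt a * (x - c * t)) * Real.sqrt a) x := by
    have hin : HasDerivAt (fun y : ℝ => Real.sqrt a * (y - c * t)) (Real.sqrt a) x := by
      simpa using ((hasDerivAt_id x).sub_const (c * t)).const_mul (Real.sqrt a)
    exact (Real.hasDerivAt_cosh _).comp x hin
  have hD : HasDerivAt (fun y : ℝ => ((Real.cosh (Real.sqrt a * (y - c * t)) : ℝ) : ℂ))
      (↑(Real.sinh (Real.sqrt a * (x - c * t)) * Real.sqrt a)) x := hDr.ofReal_comp
  have hne : ((Real.cosh (Real.sqrt a * (x - c * t)) : ℝ) : ℂ) ≠ 0 :=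
    Complex.ofReal_ne_zero.mpr (Real.cosh_pos _).ne'
  have := hN.div hD hne
  refine this.congr_deriv (Eq.symm ?_)
  ring

lemma stmt18_abs_sq (a c φ ch sh : ℝ) (ha : 0 < a) :
    norm ((↑(Real.sqrt (2*a)) * Complex.exp (Complex.I * (φ : ℂ)) *
        (Complex.I * ((c/2 : ℝ) : ℂ)) * (ch : ℂ)
        - ↑(Real.sqrt (2*a)) * Complex.exp (Complex.I * (φ : ℂ)) * ((sh * Real.sqrt a : ℝ) : ℂ))
        / ((ch : ℝ) : ℂ) ^ 2) ^ 2
      = 2 * a * ((c/2)^2 * ch^2 + a * sh^2) / ch^4 := by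
  have hE : norm (Complex.exp (Complex.I * (φ : ℂ))) = 1 := by
    rw [mul_comm]; exact Complex.norm_exp_ofReal_mul_I φ
  have h1 : (↑(Real.sqrt (2*a)) * Complex.exp (Complex.I * (φ : ℂ)) *
        (Complex.I * ((c/2 : ℝ) : ℂ)) * (ch : ℂ)
        - ↑(Real.sqrt (2*a)) * Complex.exp (Complex.I * (φ : ℂ)) * ((sh * Real.sqrt a : ℝ) : ℂ))
        / ((ch : ℝ) : ℂ) ^ 2
      = (↑(Real.sqrt (2*a)) * Complex.exp (Complex.I * (φ : ℂ))) *
        ((Complex.I * ((c/2 : ℝ) : ℂ) * (ch : ℂ) - ((sh * Real.sqrt a : ℝ) : ℂ)) /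
          ((ch : ℝ) : ℂ) ^ 2) := by
    ring
  rw [h1, norm_mul, norm_mul, hE, Complex.norm_real, norm_div, norm_pow, Complex.norm_real, Real.norm_eq_abs, Real.norm_eq_abs]
  have hW : norm (Complex.I * ((c/2 : ℝ) : ℂ) * (ch : ℂ) - ((sh * Real.sqrt a : ℝ) : ℂ)) ^ 2
      = (c/2 * ch)^2 + (sh * Real.sqrt a)^2 := by
    rw [Complex.sq_norm, Complex.normSq_apply]
    simp [Complex.mul_re, Complex.mul_im]
    ring
  have hsa : Real.sqrt a ^ 2 = a := Real.sq_sqrt ha.le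
  have hC : |Real.sqrt (2*a)| ^ 2 = 2 * a := by
    rw [_root_.sq_abs]; exact Real.sq_sqrt (by positivity)
  rw [mul_pow, div_pow, hW, mul_one, hC, _root_.sq_abs]
  have h2 : (sh * Real.sqrt a)^2 = a * sh^2 := by
    rw [mul_pow, hsa]; ring
  rw [h2]
  field_simp

/-- For the soliton
`Ψ(x,t) = √(2a)·exp(i(cx/2 − (c²/4 − a)t)) / cosh(√a·(x − ct))` with `a > 0`,
the energy `E(t) = ∫_ℝ (|Ψ_x(x,t)|² − (1/2)|Ψ(x,t)|⁴) dx` equals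
`√a·(c² − (4/3)a)` for every `t`; in particular, for `a = 1/100` and `c = 1/10`
the energy equals `−1/3000` for all `t`. -/
theorem stmt18 (a c : ℝ) (ha : 0 < a) (Ψ : ℝ → ℝ → ℂ)
    (hΨ : ∀ x t : ℝ, Ψ x t =
      (Real.sqrt (2 * a) : ℂ) *
        Complex.exp (Complex.I * ((c * x / 2 - (c ^ 2 / 4 - a) * t : ℝ) : ℂ)) /
        ((Real.cosh (Real.sqrt a * (x - c * t)) : ℝ) : ℂ)) :
    ∀ t : ℝ,
      (∫ x : ℝ, ((norm (deriv (fun y : ℝ => Ψ y t) x)) ^ 2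
          - (1 / 2) * (norm (Ψ x t)) ^ 4)) =
        Real.sqrt a * (c ^ 2 - (4 / 3) * a) ∧
      (a = 1 / 100 → c = 1 / 10 →
        (∫ x : ℝ, ((norm (deriv (fun y : ℝ => Ψ y t) x)) ^ 2
          - (1 / 2) * (norm (Ψ x t)) ^ 4)) = -(1 / 3000)) := by
  intro t
  have hsa0 : 0 < Real.sqrt a := Real.sqrt_pos.mpr ha
  have hsq : Real.sqrt a ^ 2 = a := Real.sq_sqrt ha.le
  set A : ℝ := a * c^2/2 + 2*a^2 with hA
  set B : ℝ := -(4*a^2) with hB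
  set k : ℝ := (c ^ 2 / 4 - a) * t with hk
  have key : (∫ x : ℝ, ((norm (deriv (fun y : ℝ => Ψ y t) x)) ^ 2
          - (1 / 2) * (norm (Ψ x t)) ^ 4)) =
        Real.sqrt a * (c ^ 2 - (4 / 3) * a) := by
    have hfun : (fun y : ℝ => Ψ y t) = fun y : ℝ =>
        (↑(Real.sqrt (2*a)) : ℂ) * Complex.exp (Complex.I * ((c * y / 2 - k : ℝ) : ℂ)) /
          ((Real.cosh (Real.sqrt a * (y - c * t)) : ℝ) : ℂ) := by
      funext y
      rw [hΨ y t]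
    have hpt : ∀ x : ℝ, (norm (deriv (fun y : ℝ => Ψ y t) x)) ^ 2
        - (1/2) * (norm (Ψ x t))^4
        = A * (1 / Real.cosh (Real.sqrt a * (x - c*t)) ^ 2)
          + B * (1 / Real.cosh (Real.sqrt a * (x - c*t)) ^ 4) := by
      intro x
      set ch : ℝ := Real.cosh (Real.sqrt a * (x - c*t)) with hch
      set sh : ℝ := Real.sinh (Real.sqrt a * (x - c*t)) with hsh
      have hchpos : 0 < ch := Real.cosh_pos _
      have hd := stmt18_hasDerivAt_psi a c t k x
      have hderiv : deriv (fun y : ℝ => Ψ y t) x =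
          ((↑(Real.sqrt (2*a)) * Complex.exp (Complex.I * ((c * x / 2 - k : ℝ) : ℂ)) *
            (Complex.I * ((c/2 : ℝ) : ℂ)) * (ch : ℂ)
          - ↑(Real.sqrt (2*a)) * Complex.exp (Complex.I * ((c * x / 2 - k : ℝ) : ℂ)) *
            ((sh * Real.sqrt a : ℝ) : ℂ))
          / ((ch : ℝ) : ℂ) ^ 2) := by
        rw [hfun]
        exact hd.deriv
      have h1 : (norm (deriv (fun y : ℝ => Ψ y t) x)) ^ 2
          = 2 * a * ((c/2)^2 * ch^2 + a * sh^2) / ch^4 := by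
        rw [hderiv]
        exact stmt18_abs_sq a c (c * x / 2 - k) ch sh ha
      have h2 : (norm (Ψ x t)) ^ 4 = (2*a)^2 / ch^4 := by
        rw [hΨ x t]
        rw [norm_div, norm_mul, Complex.norm_real, Complex.norm_real, Real.norm_eq_abs, Real.norm_eq_abs]
        have hE : norm (Complex.exp (Complex.I *
            ((c * x / 2 - (c ^ 2 / 4 - a) * t : ℝ) : ℂ))) = 1 := by
          rw [mul_comm]; exact Complex.norm_exp_ofReal_mul_I _
        rw [hE, mul_one, abs_of_nonneg (Real.sqrt_nonneg _), abs_of_pos hchpos]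
        rw [div_pow]
        congr 1
        rw [show (4:ℕ) = 2*2 by norm_num, pow_mul, Real.sq_sqrt (by positivity)]
      rw [h1, h2]
      have hs2 : sh ^ 2 = ch ^ 2 - 1 := Real.sinh_sq _
      have hchne : ch ≠ 0 := hchpos.ne'
      rw [hA, hB, hs2]
      field_simp
      ring
    have hcong : (∫ x : ℝ, ((norm (deriv (fun y : ℝ => Ψ y t) x)) ^ 2
          - (1 / 2) * (norm (Ψ x t)) ^ 4))
        = ∫ x : ℝ, (A * (1 / Real.cosh (Real.sqrt a * (x - c*t)) ^ 2)
          + B * (1 / Real.cosh (Real.sqrt a * (x - c*t)) ^ 4)) :=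
      integral_congr_ae (Filter.Eventually.of_forall hpt)
    rw [hcong]
    have h3 : (∫ x : ℝ, (A * (1 / Real.cosh (Real.sqrt a * (x - c*t)) ^ 2)
          + B * (1 / Real.cosh (Real.sqrt a * (x - c*t)) ^ 4)))
        = ∫ y : ℝ, (A * (1 / Real.cosh (Real.sqrt a * y) ^ 2)
          + B * (1 / Real.cosh (Real.sqrt a * y) ^ 4)) :=
      integral_sub_right_eq_self (fun y : ℝ => A * (1 / Real.cosh (Real.sqrt a * y) ^ 2)
          + B * (1 / Real.cosh (Real.sqrt a * y) ^ 4)) (c*t)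
    rw [h3]
    have h4 : (∫ y : ℝ, (A * (1 / Real.cosh (Real.sqrt a * y) ^ 2)
          + B * (1 / Real.cosh (Real.sqrt a * y) ^ 4)))
        = |(Real.sqrt a)⁻¹| • ∫ u : ℝ, (A * (1 / Real.cosh u ^ 2) + B * (1 / Real.cosh u ^ 4)) :=
      MeasureTheory.Measure.integral_comp_mul_left
        (fun u : ℝ => A * (1 / Real.cosh u ^ 2) + B * (1 / Real.cosh u ^ 4)) (Real.sqrt a)
    rw [h4]
    have h5 : (∫ u : ℝ, (A * (1 / Real.cosh u ^ 2) + B * (1 / Real.cosh u ^ 4)))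
        = A * 2 + B * (4/3) := by
      rw [integral_add (stmt18_integrable_sech2.const_mul A)
        (stmt18_integrable_sech4.const_mul B), integral_const_mul, integral_const_mul,
        stmt18_integral_sech2, stmt18_integral_sech4]
    rw [h5, abs_of_pos (inv_pos.mpr hsa0), smul_eq_mul]
    have e1 : A * 2 + B * (4/3) = a * (c^2 - 4/3*a) := by rw [hA, hB]; ring
    rw [e1]
    field_simp
    rw [hsq]
  refine ⟨key, fun ha' hc' => ?_⟩
  rw [key, ha', hc']
  rw [show (1:ℝ)/100 = (1/10)^2 by norm_num, Real.sqrt_sq (by norm_num)]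
  norm_num
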